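/- The empirical Gramians converge geometrically to the exact Gramians: for every integer j, W_ce(j;m) → W_c(j) and W_oe(j;m) → W_o(j) as m → ∞; moreover, for every real r with ρ(F(j+T,j))² < r < 1 there exists a constant M ≥ 0 such that ‖W_c(j) − W_ce(j; lT)‖ ≤ M r^l and ‖W_o(j) − W_oe(j; lT)‖ ≤ M r^l for all nonnegative integers l. -/

import Mathlib

open scoped Matrix

noncomputable section

open scoped Matrix.Norms.L2Operator

/-- `transMatAux A d i = A(i+d-1) * ⋯ * A(i)`. -/
def transMatAux {n : ℕ} (A : ℤ → Matrix (Fin n) (Fin n) ℂ) : ℕ → ℤ → Matrix (Fin n) (Fin n) ℂ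
  | 0, _ => 1
  | (d + 1), i => A (i + d) * transMatAux A d i

/-- The state transition matrix `F(j,i) = A(j-1) * A(j-2) * ⋯ * A(i)` for `j ≥ i`,
with `F(i,i) = 1`. -/
def stateTrans {n : ℕ} (A : ℤ → Matrix (Fin n) (Fin n) ℂ) (j i : ℤ) :
    Matrix (Fin n) (Fin n) ℂ :=
  transMatAux A (j - i).toNat i

/-- Controllability Gramian at time `j`:
`W_c(j) = ∑_{i=-∞}^{j-1} F(j,i+1) B(i) B(i)* F(j,i+1)*`, parametrized by `i = j-1-k`, `k : ℕ`. -/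
def Wc {n p : ℕ} (A : ℤ → Matrix (Fin n) (Fin n) ℂ) (B : ℤ → Matrix (Fin n) (Fin p) ℂ)
    (j : ℤ) : Matrix (Fin n) (Fin n) ℂ :=
  ∑' k : ℕ,
    stateTrans A j (j - k) * B (j - 1 - k) * (B (j - 1 - k))ᴴ * (stateTrans A j (j - k))ᴴ

/-- Observability Gramian at time `j`:
`W_o(j) = ∑_{i=j}^{∞} F(i,j)* C(i)* C(i) F(i,j)`, parametrized by `i = j+k`, `k : ℕ`. -/
def Wo {n q : ℕ} (A : ℤ → Matrix (Fin n) (Fin n) ℂ) (C : ℤ → Matrix (Fin q) (Fin n) ℂ)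
    (j : ℤ) : Matrix (Fin n) (Fin n) ℂ :=
  ∑' k : ℕ, (stateTrans A (j + k) j)ᴴ * (C (j + k))ᴴ * C (j + k) * stateTrans A (j + k) j

/-- Empirical controllability Gramian at time `j` over `m` steps:
`W_ce(j;m) = ∑_{i=j-m}^{j-1} F(j,i+1) B(i) B(i)* F(j,i+1)*`, parametrized by `i = j-1-k`. -/
def Wce {n p : ℕ} (A : ℤ → Matrix (Fin n) (Fin n) ℂ) (B : ℤ → Matrix (Fin n) (Fin p) ℂ)
    (j : ℤ) (m : ℕ) : Matrix (Fin n) (Fin n) ℂ :=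
  ∑ k ∈ Finset.range m,
    stateTrans A j (j - k) * B (j - 1 - k) * (B (j - 1 - k))ᴴ * (stateTrans A j (j - k))ᴴ

/-- Empirical observability Gramian at time `j` over `m` steps:
`W_oe(j;m) = ∑_{i=j}^{j+m-1} F(i,j)* C(i)* C(i) F(i,j)`, parametrized by `i = j+k`. -/
def Woe {n q : ℕ} (A : ℤ → Matrix (Fin n) (Fin n) ℂ) (C : ℤ → Matrix (Fin q) (Fin n) ℂ)
    (j : ℤ) (m : ℕ) : Matrix (Fin n) (Fin n) ℂ :=
  ∑ k ∈ Finset.range m,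
    (stateTrans A (j + k) j)ᴴ * (C (j + k))ᴴ * C (j + k) * stateTrans A (j + k) j

/-!
Let `Ψ = F(j+T, j)` be the monodromy matrix. Periodicity of `A` gives the Floquet factorisations
`F(j, j-k) = Ψ^⌊k/T⌋ F(j, j-(k mod T))` and `F(j+k, j) = F(j+(k mod T), j) Ψ^⌊k/T⌋`, and by Gelfand's
formula `‖Ψ^l‖ = O(sˡ)` for every `s > ρ(Ψ)`. Since `B` and `C` are bounded, the `k`-th summand of
either Gramian is `O(r^⌊k/T⌋)` with `r = s²`, so both series converge, and their tails beyond
`lT` are `O(rˡ)`.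
-/

open Filter Function Finset

section GelfandBound

variable {R : Type*} [NormedRing R] [NormedAlgebra ℂ R] [CompleteSpace R]

theorem exists_norm_pow_le_mul_pow {a : R} {s : ℝ} (hs : spectralRadius ℂ a < ENNReal.ofReal s) :
    ∃ M, ∀ n : ℕ, ‖a ^ n‖ ≤ M * s ^ n := by
  have hs0 : 0 < s := ENNReal.ofReal_pos.mp (pos_of_gt hs)
  have hev : ∀ᶠ n : ℕ in atTop, ‖a ^ n‖ ≤ 1 * ‖s ^ n‖ := by
    filter_upwards [(spectrum.pow_norm_pow_one_div_tendsto_nhds_spectralRadius a).eventually_lt_const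
      hs, eventually_ne_atTop 0] with n hn hn0
    have hroot := (ENNReal.ofReal_lt_ofReal_iff hs0).mp hn
    calc ‖a ^ n‖ = (‖a ^ n‖ ^ (1 / n : ℝ)) ^ n := by
          rw [one_div, Real.rpow_inv_natCast_pow (norm_nonneg _) hn0]
      _ ≤ 1 * ‖s ^ n‖ := by
          rw [one_mul, Real.norm_of_nonneg (by positivity)]
          exact pow_le_pow_left₀ (by positivity) hroot.le n
  obtain ⟨M, -, hM⟩ := Asymptotics.bound_of_isBigO_nat_atTop (Asymptotics.IsBigO.of_bound 1 hev)
  refine ⟨M, fun n => ?_⟩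
  simpa only [Real.norm_of_nonneg (pow_nonneg hs0.le n)] using hM (pow_ne_zero n hs0.ne')

theorem exists_norm_pow_div_mul_le {a : R} {s : ℝ} (hs : spectralRadius ℂ a < ENNReal.ofReal s)
    {T : ℕ} (hT : 0 < T) (P : ℕ → R) :
    ∃ K, ∀ k : ℕ, ‖a ^ (k / T) * P (k % T)‖ ≤ K * s ^ (k / T) ∧
      ‖P (k % T) * a ^ (k / T)‖ ≤ K * s ^ (k / T) := by
  obtain ⟨M, hM⟩ := exists_norm_pow_le_mul_pow hs
  set c := ∑ i ∈ range T, ‖P i‖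
  have hc (k : ℕ) : ‖P (k % T)‖ ≤ c :=
    single_le_sum (fun i _ => norm_nonneg (P i)) (mem_range.mpr (k.mod_lt hT))
  refine ⟨M * c, fun k => ⟨?_, ?_⟩⟩
  · calc ‖a ^ (k / T) * P (k % T)‖ ≤ ‖a ^ (k / T)‖ * ‖P (k % T)‖ := norm_mul_le _ _
      _ ≤ M * s ^ (k / T) * c :=
          mul_le_mul (hM _) (hc k) (norm_nonneg _) ((norm_nonneg _).trans (hM _))
      _ = M * c * s ^ (k / T) := by ring
  · calc ‖P (k % T) * a ^ (k / T)‖ ≤ ‖P (k % T)‖ * ‖a ^ (k / T)‖ := norm_mul_le _ _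
      _ ≤ c * (M * s ^ (k / T)) :=
          mul_le_mul (hc k) (hM _) (norm_nonneg _) ((norm_nonneg _).trans (hc k))
      _ = M * c * s ^ (k / T) := by ring

end GelfandBound

theorem Function.Periodic.exists_norm_le {E : Type*} [Norm E] {f : ℤ → E} {c : ℤ}
    (hf : Periodic f c) (hc : 0 < c) : ∃ C, ∀ i, ‖f i‖ ≤ C := by
  obtain ⟨C, hC⟩ := ((Set.finite_Ico 0 c).image fun i => ‖f i‖).bddAbove
  refine ⟨C, fun i => ?_⟩
  obtain ⟨y, hy, hfy⟩ := hf.exists_mem_Ico₀ hc i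
  exact hfy ▸ hC (Set.mem_image_of_mem _ hy)

section Tails

theorem summable_pow_div {r : ℝ} (hr0 : 0 ≤ r) (hr1 : r < 1) {T : ℕ} (hT : 0 < T) :
    Summable fun k : ℕ => r ^ (k / T) := by
  have : NeZero T := ⟨hT.ne'⟩
  have hprod : Summable fun x : ℕ × Fin T => r ^ x.1 * 1 :=
    (summable_geometric_of_lt_one hr0 hr1).mul_of_nonneg (g := fun _ : Fin T => (1 : ℝ))
      Summable.of_finite (fun _ => by positivity) (fun _ => zero_le_one)
  simp only [mul_one] at hprod
  exact (Nat.divModEquiv T).summable_iff.mpr hprod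

variable {E : Type*} [NormedAddCommGroup E] [CompleteSpace E] {f : ℕ → E} {K r : ℝ} {T : ℕ}

theorem summable_of_norm_le_mul_pow_div (hT : 0 < T) (hr0 : 0 ≤ r) (hr1 : r < 1)
    (hf : ∀ k, ‖f k‖ ≤ K * r ^ (k / T)) : Summable f :=
  ((summable_pow_div hr0 hr1 hT).mul_left K).of_norm_bounded hf

theorem norm_tsum_sub_sum_range_mul_le (hT : 0 < T) (hr0 : 0 ≤ r) (hr1 : r < 1)
    (hf : ∀ k, ‖f k‖ ≤ K * r ^ (k / T)) (l : ℕ) :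
    ‖∑' k, f k - ∑ k ∈ range (l * T), f k‖ ≤ (K * ∑' k : ℕ, r ^ (k / T)) * r ^ l := by
  rw [← (summable_of_norm_le_mul_pow_div hT hr0 hr1 hf).sum_add_tsum_nat_add (l * T),
    add_sub_cancel_left]
  refine tsum_of_norm_bounded
    (((summable_pow_div hr0 hr1 hT).hasSum.mul_left K).mul_right (r ^ l)) fun k => ?_
  calc ‖f (k + l * T)‖ ≤ K * r ^ ((k + l * T) / T) := hf _
    _ = K * r ^ (k / T) * r ^ l := by rw [Nat.add_mul_div_right _ _ hT, pow_add, mul_assoc]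

end Tails

section MatrixNorm

variable {m d 𝕜 : Type*} [RCLike 𝕜] [Fintype m] [Fintype d] [DecidableEq m]

theorem Matrix.l2_opNorm_mul_mul_conjTranspose_mul_conjTranspose [DecidableEq d]
    (X : Matrix m m 𝕜) (Y : Matrix m d 𝕜) : ‖X * Y * Yᴴ * Xᴴ‖ = ‖X * Y‖ ^ 2 := by
  have h : X * Y * Yᴴ * Xᴴ = (X * Y)ᴴᴴ * (X * Y)ᴴ := by
    rw [Matrix.conjTranspose_conjTranspose, Matrix.conjTranspose_mul, Matrix.mul_assoc]
  rw [h, Matrix.l2_opNorm_conjTranspose_mul_self, Matrix.l2_opNorm_conjTranspose, sq]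

theorem Matrix.l2_opNorm_conjTranspose_mul_conjTranspose_mul_mul (X : Matrix m m 𝕜)
    (Y : Matrix d m 𝕜) : ‖Xᴴ * Yᴴ * Y * X‖ = ‖Y * X‖ ^ 2 := by
  rw [Matrix.mul_assoc _ Y, ← Matrix.conjTranspose_mul, Matrix.l2_opNorm_conjTranspose_mul_self, sq]

end MatrixNorm

section Floquet

variable {n : ℕ} {A : ℤ → Matrix (Fin n) (Fin n) ℂ}

theorem transMatAux_add (A : ℤ → Matrix (Fin n) (Fin n) ℂ) (d e : ℕ) (i : ℤ) :
    transMatAux A (d + e) i = transMatAux A d (i + e) * transMatAux A e i := by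
  induction d with
  | zero => simp [transMatAux]
  | succ d ih =>
    rw [Nat.add_right_comm, transMatAux, ih, transMatAux, Matrix.mul_assoc, Nat.cast_add,
      add_comm (d : ℤ), add_assoc]

theorem periodic_transMatAux {c : ℤ} (hA : Periodic A c) (d : ℕ) :
    Periodic (transMatAux A d) c := by
  induction d with
  | zero => exact fun _ => rfl
  | succ d ih => intro i; rw [transMatAux, transMatAux, ih i, add_right_comm, hA]

theorem transMatAux_mul_period {T : ℕ} (hA : Periodic A T) (l : ℕ) (i : ℤ) :
    transMatAux A (l * T) i = transMatAux A T i ^ l := by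
  induction l with
  | zero => simp [transMatAux]
  | succ l ih => rw [add_one_mul, transMatAux_add, periodic_transMatAux hA, ih, pow_succ]

theorem stateTrans_sub_natCast (A : ℤ → Matrix (Fin n) (Fin n) ℂ) (j : ℤ) (k : ℕ) :
    stateTrans A j (j - k) = transMatAux A k (j - k) := by
  simp [stateTrans]

theorem stateTrans_add_natCast (A : ℤ → Matrix (Fin n) (Fin n) ℂ) (j : ℤ) (k : ℕ) :
    stateTrans A (j + k) j = transMatAux A k j := by
  simp [stateTrans]

theorem stateTrans_sub_natCast_eq_pow_mul {T : ℕ} (hA : Periodic A T) (j : ℤ) (k : ℕ) :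
    stateTrans A j (j - k) =
      transMatAux A T j ^ (k / T) * transMatAux A (k % T) (j - (k % T : ℕ)) := by
  have hk : (k : ℤ) = (k / T : ℕ) * T + (k % T : ℕ) := by exact_mod_cast (k.div_add_mod' T).symm
  have h₁ : j - k + (k % T : ℕ) = j - (k / T : ℕ) * T := by rw [hk]; ring
  have h₂ : j - k = j - (k % T : ℕ) - (k / T : ℕ) * T := by rw [hk]; ring
  have hsplit := transMatAux_add A (k / T * T) (k % T) (j - k)
  rw [k.div_add_mod' T] at hsplit
  rw [stateTrans_sub_natCast, hsplit, h₁, h₂, (periodic_transMatAux hA _).sub_nat_mul_eq,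
    (periodic_transMatAux hA _).sub_nat_mul_eq, transMatAux_mul_period hA]

theorem stateTrans_add_natCast_eq_mul_pow {T : ℕ} (hA : Periodic A T) (j : ℤ) (k : ℕ) :
    stateTrans A (j + k) j = transMatAux A (k % T) j * transMatAux A T j ^ (k / T) := by
  have hsplit := transMatAux_add A (k % T) (k / T * T) j
  rw [k.mod_add_div' T, Nat.cast_mul, periodic_transMatAux hA _ |>.nat_mul _,
    transMatAux_mul_period hA] at hsplit
  rw [stateTrans_add_natCast, hsplit]

end Floquet

theorem exists_norm_gramian_summands_le {n p q T : ℕ} (hT : 0 < T)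
    {A : ℤ → Matrix (Fin n) (Fin n) ℂ} {B : ℤ → Matrix (Fin n) (Fin p) ℂ}
    {C : ℤ → Matrix (Fin q) (Fin n) ℂ} (hA : Periodic A T) (hB : Periodic B T)
    (hC : Periodic C T) (j : ℤ) (hρ : spectralRadius ℂ (stateTrans A (j + T) j) ≠ ⊤) {r : ℝ}
    (hr : (spectralRadius ℂ (stateTrans A (j + T) j)).toReal ^ 2 < r) :
    ∃ K, 0 ≤ K ∧ ∀ k : ℕ,
      ‖stateTrans A j (j - k) * B (j - 1 - k) * (B (j - 1 - k))ᴴ * (stateTrans A j (j - k))ᴴ‖ ≤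
          K * r ^ (k / T) ∧
        ‖(stateTrans A (j + k) j)ᴴ * (C (j + k))ᴴ * C (j + k) * stateTrans A (j + k) j‖ ≤
          K * r ^ (k / T) := by
  set s := √r
  have hs : spectralRadius ℂ (transMatAux A T j) < ENNReal.ofReal s := by
    rw [← stateTrans_add_natCast, ENNReal.lt_ofReal_iff_toReal_lt hρ]
    exact (Real.lt_sqrt ENNReal.toReal_nonneg).mpr hr
  rw [← Real.sq_sqrt ((sq_nonneg _).trans hr.le)]
  obtain ⟨Kc, hKc⟩ := exists_norm_pow_div_mul_le hs hT fun d => transMatAux A d (j - d)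
  obtain ⟨Ko, hKo⟩ := exists_norm_pow_div_mul_le hs hT fun d => transMatAux A d j
  obtain ⟨cB, hcB⟩ := hB.exists_norm_le (Int.natCast_pos.mpr hT)
  obtain ⟨cC, hcC⟩ := hC.exists_norm_le (Int.natCast_pos.mpr hT)
  have sq_le {x c : ℝ} (hx : 0 ≤ x) (l : ℕ) (h : x ≤ c * s ^ l) : x ^ 2 ≤ c ^ 2 * (s ^ 2) ^ l :=
    (pow_le_pow_left₀ hx h 2).trans_eq (by ring)
  refine ⟨(Kc * cB) ^ 2 + (cC * Ko) ^ 2, by positivity, fun k => ⟨?_, ?_⟩⟩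
  · rw [Matrix.l2_opNorm_mul_mul_conjTranspose_mul_conjTranspose]
    refine (sq_le (norm_nonneg _) (k / T) ?_).trans
      (mul_le_mul_of_nonneg_right (le_add_of_nonneg_right (sq_nonneg _)) (by positivity))
    calc ‖stateTrans A j (j - k) * B (j - 1 - k)‖
        ≤ ‖stateTrans A j (j - k)‖ * ‖B (j - 1 - k)‖ := Matrix.l2_opNorm_mul _ _
      _ ≤ Kc * s ^ (k / T) * cB := by
          rw [stateTrans_sub_natCast_eq_pow_mul hA]
          exact mul_le_mul (hKc k).1 (hcB _) (norm_nonneg _) ((norm_nonneg _).trans (hKc k).1)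
      _ = Kc * cB * s ^ (k / T) := by ring
  · rw [Matrix.l2_opNorm_conjTranspose_mul_conjTranspose_mul_mul]
    refine (sq_le (norm_nonneg _) (k / T) ?_).trans
      (mul_le_mul_of_nonneg_right (le_add_of_nonneg_left (sq_nonneg _)) (by positivity))
    calc ‖C (j + k) * stateTrans A (j + k) j‖
        ≤ ‖C (j + k)‖ * ‖stateTrans A (j + k) j‖ := Matrix.l2_opNorm_mul _ _
      _ ≤ cC * (Ko * s ^ (k / T)) := by
          rw [stateTrans_add_natCast_eq_mul_pow hA]
          exact mul_le_mul (hcC _) (hKo k).2 (norm_nonneg _) ((norm_nonneg (C 0)).trans (hcC 0))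
      _ = cC * Ko * s ^ (k / T) := by ring

theorem empirical_gramians_converge_geometrically_general
    (n p q T : ℕ) (hT : 1 ≤ T)
    (A : ℤ → Matrix (Fin n) (Fin n) ℂ) (B : ℤ → Matrix (Fin n) (Fin p) ℂ)
    (C : ℤ → Matrix (Fin q) (Fin n) ℂ)
    (hA : ∀ k : ℤ, A (k + T) = A k) (hB : ∀ k : ℤ, B (k + T) = B k)
    (hC : ∀ k : ℤ, C (k + T) = C k)
    (hstab : ∀ j : ℤ, spectralRadius ℂ (stateTrans A (j + T) j) < 1)
    (j : ℤ) :
    Filter.Tendsto (fun m : ℕ => Wce A B j m) Filter.atTop (nhds (Wc A B j)) ∧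
      Filter.Tendsto (fun m : ℕ => Woe A C j m) Filter.atTop (nhds (Wo A C j)) ∧
      ∀ r : ℝ, (spectralRadius ℂ (stateTrans A (j + T) j)).toReal ^ 2 < r → r < 1 →
        ∃ M : ℝ, 0 ≤ M ∧ ∀ l : ℕ,
          ‖Wc A B j - Wce A B j (l * T)‖ ≤ M * r ^ l ∧
          ‖Wo A C j - Woe A C j (l * T)‖ ≤ M * r ^ l := by
  have hρ := (hstab j).ne_top
  have hρ1 : (spectralRadius ℂ (stateTrans A (j + T) j)).toReal ^ 2 < 1 :=
    pow_lt_one₀ ENNReal.toReal_nonneg (ENNReal.toReal_lt_of_lt_ofReal (by simpa using hstab j))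
      two_ne_zero
  obtain ⟨r₀, hρr₀, hr₀⟩ := exists_between hρ1
  obtain ⟨K₀, -, hK₀⟩ := exists_norm_gramian_summands_le hT hA hB hC j hρ hρr₀
  have hr₀0 : 0 ≤ r₀ := (sq_nonneg _).trans hρr₀.le
  refine ⟨(summable_of_norm_le_mul_pow_div hT hr₀0 hr₀ fun k => (hK₀ k).1).hasSum.tendsto_sum_nat,
    (summable_of_norm_le_mul_pow_div hT hr₀0 hr₀ fun k => (hK₀ k).2).hasSum.tendsto_sum_nat,
    fun r hρr hr1 => ?_⟩
  obtain ⟨K, hK0, hK⟩ := exists_norm_gramian_summands_le hT hA hB hC j hρ hρr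
  have hr0 : 0 ≤ r := (sq_nonneg _).trans hρr.le
  exact ⟨K * ∑' k : ℕ, r ^ (k / T), by positivity, fun l =>
    ⟨norm_tsum_sub_sum_range_mul_le hT hr0 hr1 (fun k => (hK k).1) l,
      norm_tsum_sub_sum_range_mul_le hT hr0 hr1 (fun k => (hK k).2) l⟩⟩

/-- The empirical Gramians converge geometrically to the exact Gramians:
`W_ce(j;m) → W_c(j)` and `W_oe(j;m) → W_o(j)` as `m → ∞`; moreover for every real `r` with
`ρ(F(j+T,j))² < r < 1` there is `M ≥ 0` with `‖W_c(j) − W_ce(j;lT)‖ ≤ M rˡ` and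
`‖W_o(j) − W_oe(j;lT)‖ ≤ M rˡ` for all `l`, where `‖·‖` is the operator norm induced by
the Euclidean norm. -/
theorem empirical_gramians_converge_geometrically
    (n p q T : ℕ) (hn : 1 ≤ n) (hp : 1 ≤ p) (hq : 1 ≤ q) (hT : 1 ≤ T)
    (A : ℤ → Matrix (Fin n) (Fin n) ℂ) (B : ℤ → Matrix (Fin n) (Fin p) ℂ)
    (C : ℤ → Matrix (Fin q) (Fin n) ℂ)
    (hA : ∀ k : ℤ, A (k + T) = A k) (hB : ∀ k : ℤ, B (k + T) = B k)
    (hC : ∀ k : ℤ, C (k + T) = C k)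
    (hstab : ∀ j : ℤ, spectralRadius ℂ (stateTrans A (j + T) j) < 1)
    (j : ℤ) :
    Filter.Tendsto (fun m : ℕ => Wce A B j m) Filter.atTop (nhds (Wc A B j)) ∧
      Filter.Tendsto (fun m : ℕ => Woe A C j m) Filter.atTop (nhds (Wo A C j)) ∧
      ∀ r : ℝ, (spectralRadius ℂ (stateTrans A (j + T) j)).toReal ^ 2 < r → r < 1 →
        ∃ M : ℝ, 0 ≤ M ∧ ∀ l : ℕ,
          ‖Wc A B j - Wce A B j (l * T)‖ ≤ M * r ^ l ∧
          ‖Wo A C j - Woe A C j (l * T)‖ ≤ M * r ^ l :=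
  empirical_gramians_converge_geometrically_general n p q T hT A B C hA hB hC hstab j
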